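/- Assume a−b is even and N_{m−1} ≠ 0 (i.e. the associated normalized rank-2 bundle with c_1 = 0 is unstable), and let k = max{ j ∈ ℤ : N_{m−j} ≠ 0 }. Then dim_K N_{m+t} = C(k+t+2, 2) for every integer t < k, where C(n,2) denotes the binomial coefficient (with the convention C(n,2) = 0 for n < 2). -/

import Mathlib

/-!
Fix `0 ≠ s ∈ N_{m-k}`. By maximality of `k` no prime divides all entries of `s`: dividing it out
would give a nonzero element of some `N_{m-k-e}` with `e > 0`. Let `t < k` and `u ∈ N_{m+t}`. If
`s` and `u` were independent over `R`, then `R_{d-m+k} s ⊕ R_{d-m-t} u` would inject into `N_d`.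
But for large `d` the cokernel vanishes in degree `d`, so
`dim N_d = ∑ C(d-a_i+2, 2) - ∑ C(d-b_j+2, 2)`, and when `a - b = 2m` this falls short of
`C(d-m+k+2, 2) + C(d-m-t+2, 2)` by `((2d+3)(k-t) - C)/2` for a constant `C`. Hence `g u = f s`
with `g ≠ 0`, and since `s` is primitive, `u = h s` with `h` homogeneous of degree `k+t`.
So `N_{m+t} = R_{k+t} s`.
-/

open MvPolynomial

noncomputable section

variable {K : Type*} [Field K]

/-- `p` is homogeneous of (integer) degree `d`; for `d < 0` this forces `p = 0`. -/
def homog (p : MvPolynomial (Fin 3) K) (d : ℤ) : Prop :=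
  IsWeightedHomogeneous (fun _ : Fin 3 => (1 : ℤ)) p d

/-- The degree-`d` graded piece of `⊕_{i=1}^{N} R(-a i)`, as a `K`-subspace of
`Fin N → R`, `R = K[x,y,z]`. -/
def degPiece (N : ℕ) (a : Fin N → ℤ) (d : ℤ) :
    Submodule K (Fin N → MvPolynomial (Fin 3) K) :=
  Submodule.pi Set.univ fun i =>
    weightedHomogeneousSubmodule K (fun _ : Fin 3 => (1 : ℤ)) (d - a i)

lemma mem_degPiece {N : ℕ} {a : Fin N → ℤ} {d : ℤ} {v : Fin N → MvPolynomial (Fin 3) K} :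
    v ∈ degPiece (K := K) N a d ↔ ∀ i, homog (v i) (d - a i) := by
  simp [degPiece, Submodule.mem_pi, mem_weightedHomogeneousSubmodule, homog]

/-- The map `φ : ⊕ R(-a i) → ⊕ R(-b j)` given by the matrix `Φ`, as a `K`-linear map. -/
def phiK (n : ℕ) (Φ : Matrix (Fin n) (Fin (n + 2)) (MvPolynomial (Fin 3) K)) :
    (Fin (n + 2) → MvPolynomial (Fin 3) K) →ₗ[K] (Fin n → MvPolynomial (Fin 3) K) :=
  (Matrix.mulVecLin Φ).restrictScalars K

/-- The degree-`d` graded piece of `N = ker φ`. -/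
def Nd (n : ℕ) (a : Fin (n + 2) → ℤ) (Φ : Matrix (Fin n) (Fin (n + 2)) (MvPolynomial (Fin 3) K))
    (d : ℤ) : Submodule K (Fin (n + 2) → MvPolynomial (Fin 3) K) :=
  degPiece (n + 2) a d ⊓ LinearMap.ker (phiK n Φ)

/-- The image of the degree-`d` piece of `F` inside the degree-`d` piece of `G`,
viewed as a subspace of the latter. -/
def MdSub (n : ℕ) (a : Fin (n + 2) → ℤ) (b : Fin n → ℤ)
    (Φ : Matrix (Fin n) (Fin (n + 2)) (MvPolynomial (Fin 3) K)) (d : ℤ) :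
    Submodule K ↥(degPiece (K := K) n b d) :=
  Submodule.comap (degPiece (K := K) n b d).subtype
    (Submodule.map (phiK n Φ) (degPiece (n + 2) a d))

/-- The degree-`d` graded piece of `M = coker φ`. -/
abbrev Md (n : ℕ) (a : Fin (n + 2) → ℤ) (b : Fin n → ℤ)
    (Φ : Matrix (Fin n) (Fin (n + 2)) (MvPolynomial (Fin 3) K)) (d : ℤ) :=
  ↥(degPiece (K := K) n b d) ⧸ MdSub n a b Φ d

/-- Multiplication by `L` on tuples of polynomials, as a `K`-linear map. -/
def mulL (N : ℕ) (L : MvPolynomial (Fin 3) K) :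
    (Fin N → MvPolynomial (Fin 3) K) →ₗ[K] (Fin N → MvPolynomial (Fin 3) K) :=
  ((LinearMap.lsmul (MvPolynomial (Fin 3) K) (Fin N → MvPolynomial (Fin 3) K)) L).restrictScalars K

lemma mulL_apply {N : ℕ} (L : MvPolynomial (Fin 3) K) (v : Fin N → MvPolynomial (Fin 3) K) :
    mulL N L v = L • v := rfl

lemma mulL_mem {N : ℕ} {a : Fin N → ℤ} {L : MvPolynomial (Fin 3) K} (hL : homog L 1)
    {d : ℤ} {v : Fin N → MvPolynomial (Fin 3) K} (hv : v ∈ degPiece (K := K) N a (d - 1)) :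
    mulL N L v ∈ degPiece (K := K) N a d := by
  rw [mem_degPiece] at hv ⊢
  intro i
  have h := hL.mul (hv i)
  have e : (1 : ℤ) + (d - 1 - a i) = d - a i := by ring
  rw [e] at h
  simpa [mulL_apply, smul_eq_mul, homog] using h

/-- Multiplication by `L` from the degree-`d-1` piece of `G` to the degree-`d` piece. -/
def mulLres (n : ℕ) (b : Fin n → ℤ) (L : MvPolynomial (Fin 3) K) (hL : homog L 1) (d : ℤ) :
    ↥(degPiece (K := K) n b (d - 1)) →ₗ[K] ↥(degPiece (K := K) n b d) :=
  (mulL n L).restrict fun _ hv => mulL_mem hL hv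

lemma mulLres_comap (n : ℕ) (a : Fin (n + 2) → ℤ) (b : Fin n → ℤ)
    (Φ : Matrix (Fin n) (Fin (n + 2)) (MvPolynomial (Fin 3) K))
    (L : MvPolynomial (Fin 3) K) (hL : homog L 1) (d : ℤ) :
    MdSub n a b Φ (d - 1) ≤ Submodule.comap (mulLres n b L hL d) (MdSub n a b Φ d) := by
  rintro ⟨w, hw⟩ hmem
  obtain ⟨v, hv, hφv⟩ := hmem
  refine ⟨mulL (n + 2) L v, mulL_mem hL hv, ?_⟩
  show phiK n Φ (mulL (n + 2) L v) = ((mulLres n b L hL d) ⟨w, hw⟩ : Fin n → MvPolynomial (Fin 3) K)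
  have : phiK n Φ (mulL (n + 2) L v) = L • phiK n Φ v := by
    simp [phiK, mulL_apply]
  rw [this, hφv]
  rfl

/-- The map induced by multiplication by `L` from `M_{d-1}` to `M_d`,
where `M = coker φ`. -/
def mulLmap (n : ℕ) (a : Fin (n + 2) → ℤ) (b : Fin n → ℤ)
    (Φ : Matrix (Fin n) (Fin (n + 2)) (MvPolynomial (Fin 3) K))
    (L : MvPolynomial (Fin 3) K) (hL : homog L 1) (d : ℤ) :
    Md n a b Φ (d - 1) →ₗ[K] Md n a b Φ d :=
  Submodule.mapQ (MdSub n a b Φ (d - 1)) (MdSub n a b Φ d) (mulLres n b L hL d)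
    (mulLres_comap n a b Φ L hL d)

/-- The linear form with coefficient vector `c`. -/
def linform (c : Fin 3 → K) : MvPolynomial (Fin 3) K := ∑ i, C (c i) * X i

lemma homog_linform (c : Fin 3 → K) : homog (linform c) 1 := by
  rw [homog, ← mem_weightedHomogeneousSubmodule]
  refine sum_mem fun i _ => ?_
  rw [mem_weightedHomogeneousSubmodule]
  simpa using (isWeightedHomogeneous_C (fun _ : Fin 3 => (1 : ℤ)) (c i)).mul
    (isWeightedHomogeneous_X K (fun _ : Fin 3 => (1 : ℤ)) i)

/-- Finite length of `coker φ`: all sufficiently high graded pieces vanish. -/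
def FiniteColength (n : ℕ) (a : Fin (n + 2) → ℤ) (b : Fin n → ℤ)
    (Φ : Matrix (Fin n) (Fin (n + 2)) (MvPolynomial (Fin 3) K)) : Prop :=
  ∃ D : ℤ, ∀ d : ℤ, D ≤ d →
    degPiece (K := K) n b d ≤ Submodule.map (phiK n Φ) (degPiece (n + 2) a d)

end

namespace MvPolynomial

variable {σ R : Type*} [CommRing R]

noncomputable def scaleVars : MvPolynomial σ R →ₐ[R] Polynomial (MvPolynomial σ R) :=
  aeval fun i => Polynomial.C (X i) * Polynomial.X

lemma scaleVars_monomial (d : σ →₀ ℕ) (r : R) :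
    scaleVars (monomial d r) = Polynomial.C (monomial d r) * Polynomial.X ^ d.degree := by
  classical
  rw [scaleVars, aeval_monomial, Finsupp.prod, Finsupp.degree]
  simp only [mul_pow, Finset.prod_mul_distrib, Finset.prod_pow_eq_pow_sum, ← map_pow, ← map_prod]
  rw [monomial_eq, Finsupp.prod, Polynomial.algebraMap_apply, ← mul_assoc, ← map_mul]
  rfl

lemma coeff_scaleVars (p : MvPolynomial σ R) (j : ℕ) :
    (scaleVars p).coeff j = homogeneousComponent j p := by
  induction p using MvPolynomial.induction_on' with
  | monomial d r =>
    rw [scaleVars_monomial, Polynomial.coeff_C_mul_X_pow,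
      homogeneousComponent_of_mem (isHomogeneous_monomial r rfl)]
  | add p q hp hq => rw [map_add, Polynomial.coeff_add, hp, hq, map_add]

lemma coeff_homogeneousComponent_degree (d : σ →₀ ℕ) (p : MvPolynomial σ R) :
    coeff d (homogeneousComponent d.degree p) = coeff d p := by
  rw [coeff_homogeneousComponent, if_pos rfl]

lemma scaleVars_ne_zero {p : MvPolynomial σ R} (hp : p ≠ 0) : scaleVars p ≠ 0 := by
  obtain ⟨d, hd⟩ := ne_zero_iff.mp hp
  intro h
  apply hd
  rw [← coeff_homogeneousComponent_degree, ← coeff_scaleVars, h, Polynomial.coeff_zero,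
    coeff_zero]

lemma isHomogeneous_of_natTrailingDegree_scaleVars {p : MvPolynomial σ R}
    (h : (scaleVars p).natTrailingDegree = (scaleVars p).natDegree) :
    p.IsHomogeneous (scaleVars p).natDegree := by
  intro d hd
  have hc : (scaleVars p).coeff d.degree ≠ 0 := fun h0 => hd (by
    rw [← coeff_homogeneousComponent_degree, ← coeff_scaleVars, h0, coeff_zero])
  have := Polynomial.le_natDegree_of_ne_zero hc
  have := Polynomial.natTrailingDegree_le_of_ne_zero hc
  have hdeg : Finsupp.weight 1 d = d.degree := by
    rw [Finsupp.degree_eq_weight_one]; rfl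
  omega

/- Over a domain the leading and trailing `T`-degrees of `p(T x)` are additive, and they agree
exactly when `p` is homogeneous. -/
theorem IsHomogeneous.exists_of_mul [IsDomain R] {p q : MvPolynomial σ R} {n : ℕ}
    (h : (p * q).IsHomogeneous n) (hp : p ≠ 0) (hq : q ≠ 0) :
    ∃ i j, i + j = n ∧ p.IsHomogeneous i ∧ q.IsHomogeneous j := by
  have hP := scaleVars_ne_zero hp
  have hQ := scaleVars_ne_zero hq
  have hcoeff : ∀ j, j ≠ n → (scaleVars p * scaleVars q).coeff j = 0 := fun j hj => by
    rw [← map_mul, coeff_scaleVars, homogeneousComponent_of_mem h, if_neg hj]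
  have hdeg : (scaleVars p * scaleVars q).natDegree ≤ n :=
    Polynomial.natDegree_le_iff_coeff_eq_zero.mpr fun j hj => hcoeff j hj.ne'
  have htrail : n ≤ (scaleVars p * scaleVars q).natTrailingDegree :=
    Polynomial.le_natTrailingDegree (mul_ne_zero hP hQ) fun j hj => hcoeff j hj.ne
  rw [Polynomial.natDegree_mul hP hQ] at hdeg
  rw [Polynomial.natTrailingDegree_mul hP hQ] at htrail
  have := Polynomial.natTrailingDegree_le_natDegree (p := scaleVars p)
  have := Polynomial.natTrailingDegree_le_natDegree (p := scaleVars q)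
  exact ⟨_, _, by omega, isHomogeneous_of_natTrailingDegree_scaleVars (by omega),
    isHomogeneous_of_natTrailingDegree_scaleVars (by omega)⟩

theorem finrank_homogeneousSubmodule {K : Type*} [Field K] [Fintype σ] [DecidableEq σ] (n : ℕ) :
    Module.finrank K (homogeneousSubmodule σ K n) = (Fintype.card σ + n - 1).choose n := by
  rw [homogeneousSubmodule_eq_finsupp_supported]
  refine (Module.finrank_eq_nat_card_basis (basisRestrictSupport K _)).trans ?_
  rw [← Finset.card_univ, ← Finset.card_finsuppAntidiag_nat_eq_choose, ← Nat.card_eq_finsetCard]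
  congr
  ext d
  simp [Finset.mem_finsuppAntidiag, Finsupp.degree_eq_sum]

end MvPolynomial

theorem Submodule.finrank_inf_ker_add_finrank_map {K V W : Type*} [DivisionRing K]
    [AddCommGroup V] [Module K V] [AddCommGroup W] [Module K W] (f : V →ₗ[K] W)
    (P : Submodule K V) [FiniteDimensional K P] :
    Module.finrank K ↥(P ⊓ LinearMap.ker f) + Module.finrank K ↥(P.map f)
      = Module.finrank K P := by
  have := LinearMap.finrank_range_add_finrank_ker (f.domRestrict P)
  rw [LinearMap.range_domRestrict, LinearMap.ker_domRestrict,
    ← Submodule.finrank_map_subtype_eq, Submodule.map_comap_subtype] at this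
  omega

theorem exists_eq_smul_of_smul_eq_smul {R ι : Type*} [CommRing R] [IsDomain R]
    [UniqueFactorizationMonoid R] {s u : ι → R} (hs : ∀ p : R, Prime p → ¬∀ i, p ∣ s i)
    {f g : R} (hg : g ≠ 0) (h : g • u = f • s) : ∃ c : R, u = c • s := by
  induction g using UniqueFactorizationMonoid.induction_on_prime generalizing f with
  | h₁ => exact absurd rfl hg
  | h₂ g hunit =>
    obtain ⟨c, hc⟩ := hunit.exists_left_inv
    exact ⟨c * f, by rw [mul_smul, ← h, smul_smul, hc, one_smul]⟩
  | h₃ g p hg0 hp ih =>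
    have hpf : p ∣ f := by
      by_contra hpf
      refine hs p hp fun i => (hp.dvd_or_dvd ?_).resolve_left hpf
      exact ⟨g * u i, by simpa [mul_assoc] using (congrFun h i).symm⟩
    obtain ⟨f', rfl⟩ := hpf
    refine ih hg0 (f := f') (funext fun i => mul_left_cancel₀ hp.ne_zero ?_)
    simpa [mul_assoc] using congrFun h i

section Homog

open MvPolynomial

variable {K : Type*} [Field K] {p q : MvPolynomial (Fin 3) K} {d e : ℤ}

lemma weight_intOne_eq_degree (m : Fin 3 →₀ ℕ) :
    Finsupp.weight (fun _ : Fin 3 => (1 : ℤ)) m = m.degree := by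
  simp [Finsupp.weight_apply, Finsupp.degree_apply, Finsupp.sum]

lemma homog_natCast_iff {n : ℕ} : homog p n ↔ p.IsHomogeneous n := by
  simp only [homog, IsWeightedHomogeneous, weight_intOne_eq_degree, IsHomogeneous, Nat.cast_inj,
    Finsupp.degree_eq_weight_one]
  rfl

lemma homog.nonneg (h : homog p d) (hp : p ≠ 0) : 0 ≤ d := by
  obtain ⟨m, hm⟩ := ne_zero_iff.mp hp
  rw [← h hm, weight_intOne_eq_degree]
  exact Int.natCast_nonneg _

lemma homog.mul (hp : homog p d) (hq : homog q e) : homog (p * q) (d + e) :=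
  IsWeightedHomogeneous.mul hp hq

lemma homog_zero (d : ℤ) : homog (0 : MvPolynomial (Fin 3) K) d :=
  isWeightedHomogeneous_zero _ _ _

lemma exists_homog_of_homog_mul (h : homog (p * q) d) (hp : p ≠ 0) (hq : q ≠ 0) :
    ∃ e : ℕ, homog p e ∧ homog q (d - e) := by
  lift d to ℕ using h.nonneg (mul_ne_zero hp hq)
  obtain ⟨i, j, rfl, hi, hj⟩ := IsHomogeneous.exists_of_mul (homog_natCast_iff.mp h) hp hq
  refine ⟨i, homog_natCast_iff.mpr hi, ?_⟩
  rw [Nat.cast_add, add_sub_cancel_left]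
  exact homog_natCast_iff.mpr hj

lemma homog_of_homog_mul_left (hp : homog p e) (hp0 : p ≠ 0) (h : homog (p * q) d) :
    homog q (d - e) := by
  rcases eq_or_ne q 0 with rfl | hq
  · exact homog_zero _
  obtain ⟨e', hpe', hq'⟩ := exists_homog_of_homog_mul h hp0 hq
  rwa [IsWeightedHomogeneous.inj_right hp0 hp hpe']

lemma isUnit_of_homog_zero (h : homog p 0) (hp : p ≠ 0) : IsUnit p := by
  rw [← Nat.cast_zero, homog_natCast_iff, ← totalDegree_zero_iff_isHomogeneous,
    totalDegree_eq_zero_iff_eq_C] at h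
  rw [h] at hp ⊢
  exact (Ne.isUnit (by simpa using hp)).map C

variable (K) in
lemma weightedHomogeneousSubmodule_one_natCast (n : ℕ) :
    weightedHomogeneousSubmodule K (fun _ : Fin 3 => (1 : ℤ)) n
      = homogeneousSubmodule (Fin 3) K n := by
  ext p
  exact homog_natCast_iff

variable (K) in
lemma weightedHomogeneousSubmodule_one_of_neg (hd : d < 0) :
    weightedHomogeneousSubmodule K (fun _ : Fin 3 => (1 : ℤ)) d = ⊥ :=
  (Submodule.eq_bot_iff _).mpr fun p hp => by
    by_contra hp0
    exact (homog.nonneg hp hp0).not_gt hd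

end Homog

section Dimension

open MvPolynomial Module

variable {K : Type*} [Field K]

instance (d : ℤ) :
    FiniteDimensional K (weightedHomogeneousSubmodule K (fun _ : Fin 3 => (1 : ℤ)) d) := by
  rcases lt_or_ge d 0 with hd | hd
  · rw [weightedHomogeneousSubmodule_one_of_neg K hd]
    infer_instance
  · lift d to ℕ using hd
    rw [weightedHomogeneousSubmodule_one_natCast]
    exact Module.Finite.iff_fg.mpr (homogeneousSubmodule_fg (Fin 3) K d)

lemma finrank_weightedHomogeneousSubmodule_one (d : ℤ) :
    finrank K (weightedHomogeneousSubmodule K (fun _ : Fin 3 => (1 : ℤ)) d)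
      = (d + 2).toNat.choose 2 := by
  rcases lt_or_ge d 0 with hd | hd
  · rw [weightedHomogeneousSubmodule_one_of_neg K hd, finrank_bot,
      Nat.choose_eq_zero_of_lt (by omega)]
  · lift d to ℕ using hd
    rw [weightedHomogeneousSubmodule_one_natCast, finrank_homogeneousSubmodule, Fintype.card_fin,
      show 3 + d - 1 = d + 2 by omega, Nat.choose_symm_add]
    rfl

def degPieceEquiv (N : ℕ) (a : Fin N → ℤ) (d : ℤ) :
    degPiece (K := K) N a d ≃ₗ[K]
      Π i, weightedHomogeneousSubmodule K (fun _ : Fin 3 => (1 : ℤ)) (d - a i) where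
  toFun v i := ⟨v.1 i, v.2 i (Set.mem_univ i)⟩
  map_add' _ _ := rfl
  map_smul' _ _ := rfl
  invFun f := ⟨fun i => f i, fun i _ => (f i).2⟩
  left_inv _ := rfl
  right_inv _ := rfl

instance (N : ℕ) (a : Fin N → ℤ) (d : ℤ) : FiniteDimensional K (degPiece (K := K) N a d) :=
  Module.Finite.equiv (degPieceEquiv N a d).symm

lemma finrank_degPiece (N : ℕ) (a : Fin N → ℤ) (d : ℤ) :
    finrank K (degPiece (K := K) N a d) = ∑ i, (d - a i + 2).toNat.choose 2 := by
  simp only [(degPieceEquiv N a d).finrank_eq, finrank_pi_fintype,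
    finrank_weightedHomogeneousSubmodule_one]

instance (n : ℕ) (a : Fin (n + 2) → ℤ)
    (Φ : Matrix (Fin n) (Fin (n + 2)) (MvPolynomial (Fin 3) K)) (d : ℤ) :
    FiniteDimensional K (Nd n a Φ d) :=
  Submodule.finiteDimensional_of_le inf_le_left

end Dimension

section Graded

open MvPolynomial Module

variable {K : Type*} [Field K] {n : ℕ} {a : Fin (n + 2) → ℤ} {b : Fin n → ℤ}
  {Φ : Matrix (Fin n) (Fin (n + 2)) (MvPolynomial (Fin 3) K)}
  {f : MvPolynomial (Fin 3) K} {s : Fin (n + 2) → MvPolynomial (Fin 3) K} {d e : ℤ}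

lemma smul_mem_degPiece {N : ℕ} {a : Fin N → ℤ} {v : Fin N → MvPolynomial (Fin 3) K}
    (hf : homog f e) (hv : v ∈ degPiece (K := K) N a d) :
    f • v ∈ degPiece (K := K) N a (e + d) := by
  rw [mem_degPiece] at hv ⊢
  intro i
  rw [add_sub_assoc]
  exact hf.mul (hv i)

lemma mem_degPiece_of_smul_mem {N : ℕ} {a : Fin N → ℤ} {v : Fin N → MvPolynomial (Fin 3) K}
    (hf : homog f e) (hf0 : f ≠ 0) (h : f • v ∈ degPiece (K := K) N a d) :
    v ∈ degPiece (K := K) N a (d - e) := by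
  rw [mem_degPiece] at h ⊢
  intro i
  rw [sub_right_comm]
  exact homog_of_homog_mul_left hf hf0 (h i)

lemma homog_of_smul_mem_degPiece {N : ℕ} {a : Fin N → ℤ} {v : Fin N → MvPolynomial (Fin 3) K}
    (hv : v ∈ degPiece (K := K) N a e) (hv0 : v ≠ 0) (h : f • v ∈ degPiece (K := K) N a d) :
    homog f (d - e) := by
  obtain ⟨i, hi⟩ := Function.ne_iff.mp hv0
  have hfi := mem_degPiece.mp h i
  rw [Pi.smul_apply, smul_eq_mul, mul_comm] at hfi
  simpa using homog_of_homog_mul_left (mem_degPiece.mp hv i) hi hfi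

lemma phiK_smul (v : Fin (n + 2) → MvPolynomial (Fin 3) K) :
    phiK n Φ (f • v) = f • phiK n Φ v :=
  (Matrix.mulVecLin Φ).map_smul f v

lemma smul_mem_Nd (hf : homog f e) (hv : s ∈ Nd n a Φ d) : f • s ∈ Nd n a Φ (e + d) :=
  ⟨smul_mem_degPiece hf hv.1, by
    rw [SetLike.mem_coe, LinearMap.mem_ker, phiK_smul, LinearMap.mem_ker.mp hv.2, smul_zero]⟩

lemma map_phiK_degPiece_le (hΦ : ∀ j i, homog (Φ j i) (a i - b j)) (d : ℤ) :
    (degPiece (n + 2) a d).map (phiK n Φ) ≤ degPiece (K := K) n b d := by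
  rintro _ ⟨v, hv, rfl⟩
  rw [SetLike.mem_coe, mem_degPiece] at hv
  rw [mem_degPiece]
  intro j
  refine IsWeightedHomogeneous.sum _ _ _ fun i _ => ?_
  simpa [homog] using (hΦ j i).mul (hv i)

lemma finrank_Nd_add_of_le_map (hΦ : ∀ j i, homog (Φ j i) (a i - b j))
    (hd : degPiece (K := K) n b d ≤ (degPiece (n + 2) a d).map (phiK n Φ)) :
    finrank K (Nd n a Φ d) + ∑ j, (d - b j + 2).toNat.choose 2
      = ∑ i, (d - a i + 2).toNat.choose 2 := by
  rw [← finrank_degPiece (K := K), ← finrank_degPiece (K := K),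
    ← (map_phiK_degPiece_le hΦ d).antisymm hd]
  exact Submodule.finrank_inf_ker_add_finrank_map _ _

end Graded

section Count

open MvPolynomial Module

variable {K : Type*} [Field K] {n : ℕ} {a : Fin (n + 2) → ℤ}
  {Φ : Matrix (Fin n) (Fin (n + 2)) (MvPolynomial (Fin 3) K)}
  {s u : Fin (n + 2) → MvPolynomial (Fin 3) K}

lemma add_choose_two_le_finrank_Nd {ds du : ℤ} (hs : s ∈ Nd n a Φ ds) (hs0 : s ≠ 0)
    (hu : u ∈ Nd n a Φ du) (hindep : ∀ f g : MvPolynomial (Fin 3) K, g • u = f • s → g = 0)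
    (d : ℤ) :
    (d - ds + 2).toNat.choose 2 + (d - du + 2).toNat.choose 2 ≤ finrank K (Nd n a Φ d) := by
  set W₁ := weightedHomogeneousSubmodule K (fun _ : Fin 3 => (1 : ℤ)) (d - ds)
  set W₂ := weightedHomogeneousSubmodule K (fun _ : Fin 3 => (1 : ℤ)) (d - du)
  let θ : W₁ × W₂ →ₗ[K] Fin (n + 2) → MvPolynomial (Fin 3) K :=
    ((LinearMap.toSpanSingleton _ _ s).restrictScalars K ∘ₗ W₁.subtype).coprod
      ((LinearMap.toSpanSingleton _ _ u).restrictScalars K ∘ₗ W₂.subtype)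
  have hθ : ∀ x, θ x = x.1.1 • s + x.2.1 • u := fun _ => rfl
  have hinj : Function.Injective θ := by
    rw [← LinearMap.ker_eq_bot, LinearMap.ker_eq_bot']
    rintro ⟨⟨f, _⟩, ⟨g, _⟩⟩ h
    rw [hθ] at h
    obtain rfl : g = 0 := hindep (-f) g (by rw [neg_smul]; exact eq_neg_of_add_eq_zero_right h)
    rw [zero_smul, add_zero, smul_eq_zero] at h
    obtain rfl : f = 0 := h.resolve_right hs0
    rfl
  have hrange : LinearMap.range θ ≤ Nd n a Φ d := by
    rintro _ ⟨⟨⟨f, hf⟩, ⟨g, hg⟩⟩, rfl⟩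
    have hfs := smul_mem_Nd hf hs
    have hgu := smul_mem_Nd hg hu
    rw [sub_add_cancel] at hfs hgu
    exact add_mem hfs hgu
  calc _ = finrank K (W₁ × W₂) := by
        rw [finrank_prod, finrank_weightedHomogeneousSubmodule_one,
          finrank_weightedHomogeneousSubmodule_one]
    _ = finrank K (LinearMap.range θ) := (LinearMap.finrank_range_of_inj hinj).symm
    _ ≤ _ := Submodule.finrank_mono hrange

lemma finrank_Nd_of_forall_eq_smul {ds d : ℤ} (hs : s ∈ Nd n a Φ ds) (hs0 : s ≠ 0)
    (hgen : ∀ u ∈ Nd n a Φ d, ∃ h : MvPolynomial (Fin 3) K, u = h • s) :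
    finrank K (Nd n a Φ d) = (d - ds + 2).toNat.choose 2 := by
  set W := weightedHomogeneousSubmodule K (fun _ : Fin 3 => (1 : ℤ)) (d - ds)
  let μ := (LinearMap.toSpanSingleton (MvPolynomial (Fin 3) K) _ s).restrictScalars K
  have hμ : Function.Injective μ := smul_left_injective _ hs0
  have hNd : Nd n a Φ d = W.map μ := by
    apply le_antisymm
    · intro u hu
      obtain ⟨h, rfl⟩ := hgen u hu
      exact ⟨h, homog_of_smul_mem_degPiece hs.1 hs0 hu.1, rfl⟩
    · rintro _ ⟨h, hh, rfl⟩
      have := smul_mem_Nd hh hs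
      rwa [sub_add_cancel] at this
  rw [hNd, ← finrank_weightedHomogeneousSubmodule_one (K := K)]
  exact (Submodule.equivMapOfInjective μ hμ W).finrank_eq.symm

end Count

lemma two_mul_choose_two_toNat {x : ℤ} (hx : 0 ≤ x) :
    2 * ((x + 2).toNat.choose 2 : ℤ) = (x + 2) * (x + 1) := by
  lift x to ℕ using hx
  have h : (x + 2).choose 2 * 2 = (x + 2) * (x + 1) := by
    rw [← Nat.add_one_mul_choose_eq, Nat.choose_one_right]
  rw [show ((x : ℤ) + 2).toNat = x + 2 by omega, mul_comm]
  exact_mod_cast h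

lemma two_mul_sum_choose_two_toNat {N : ℕ} (c : Fin N → ℤ) {d : ℤ} (hc : ∀ i, c i ≤ d) :
    2 * ((∑ i, (d - c i + 2).toNat.choose 2 : ℕ) : ℤ)
      = N * ((d + 2) * (d + 1)) - (2 * d + 3) * ∑ i, c i + ∑ i, c i ^ 2 := by
  have h : ∀ i, 2 * ((d - c i + 2).toNat.choose 2 : ℤ)
      = (d + 2) * (d + 1) - (2 * d + 3) * c i + c i ^ 2 := fun i => by
    rw [two_mul_choose_two_toNat (sub_nonneg.mpr (hc i))]
    ring
  push_cast
  rw [Finset.mul_sum, Finset.sum_congr rfl fun i _ => h i, Finset.sum_add_distrib,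
    Finset.sum_sub_distrib, Finset.sum_const, Finset.card_univ, Fintype.card_fin, nsmul_eq_mul,
    Finset.mul_sum]

section Dependence

open MvPolynomial Module Filter

variable {K : Type*} [Field K] {n : ℕ} {a : Fin (n + 2) → ℤ} {b : Fin n → ℤ}
  {Φ : Matrix (Fin n) (Fin (n + 2)) (MvPolynomial (Fin 3) K)}
  {s u : Fin (n + 2) → MvPolynomial (Fin 3) K} {m k t : ℤ}

lemma exists_smul_eq_smul (hΦ : ∀ j i, homog (Φ j i) (a i - b j))
    (hfin : FiniteColength n a b Φ) (hm : ∑ i, a i - ∑ j, b j = 2 * m) (htk : t < k)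
    (hs : s ∈ Nd n a Φ (m - k)) (hs0 : s ≠ 0) (hu : u ∈ Nd n a Φ (m + t)) :
    ∃ f g : MvPolynomial (Fin 3) K, g ≠ 0 ∧ g • u = f • s := by
  by_contra! hindep
  obtain ⟨D, hD⟩ := hfin
  set C := ∑ i, a i ^ 2 - ∑ j, b j ^ 2 - (m - k) ^ 2 - (m + t) ^ 2
  obtain ⟨d, hdD, hda, hdb, hdk, hdt, hdC⟩ : ∃ d, D ≤ d ∧ (∀ i, a i ≤ d) ∧ (∀ j, b j ≤ d) ∧
      m - k ≤ d ∧ m + t ≤ d ∧ |C| ≤ d :=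
    ((eventually_ge_atTop D).and <|
      (eventually_all.mpr fun i => eventually_ge_atTop (a i)).and <|
      (eventually_all.mpr fun j => eventually_ge_atTop (b j)).and <|
      (eventually_ge_atTop (m - k)).and <| (eventually_ge_atTop (m + t)).and <|
      eventually_ge_atTop |C|).exists
  have hrank := finrank_Nd_add_of_le_map hΦ (hD d hdD)
  have hlow := add_choose_two_le_finrank_Nd hs hs0 hu
    (fun f g h => by_contra fun hg => hindep f g hg h) d
  zify at hrank hlow
  have hA := two_mul_sum_choose_two_toNat a hda
  have hB := two_mul_sum_choose_two_toNat b hdb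
  have hS := two_mul_choose_two_toNat (sub_nonneg.mpr hdk)
  have hU := two_mul_choose_two_toNat (sub_nonneg.mpr hdt)
  have hsum : ∑ i, a i = ∑ j, b j + 2 * m := by linarith
  push_cast at hA hB
  rw [hsum] at hA
  have hCd : C < 2 * d + 3 := by linarith [le_abs_self C, abs_nonneg C]
  have hkt : 2 * d + 3 ≤ (2 * d + 3) * (k - t) :=
    le_mul_of_one_le_right (by linarith [abs_nonneg C]) (by omega)
  -- twice the surplus of `dim N_d` over the lower bound is `C - (2d+3)(k-t)`
  linarith

end Dependence

section Primitive

variable {K : Type*} [Field K] {n : ℕ} {a : Fin (n + 2) → ℤ}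
  {Φ : Matrix (Fin n) (Fin (n + 2)) (MvPolynomial (Fin 3) K)}
  {s : Fin (n + 2) → MvPolynomial (Fin 3) K} {p : MvPolynomial (Fin 3) K} {d : ℤ}

lemma exists_Nd_ne_bot_of_prime_dvd (hs : s ∈ Nd n a Φ d) (hs0 : s ≠ 0) (hp : Prime p)
    (hdvd : ∀ i, p ∣ s i) : ∃ e : ℤ, 0 < e ∧ Nd n a Φ (d - e) ≠ ⊥ := by
  choose w hw using hdvd
  have hsw : s = p • w := funext hw
  have hw0 : w ≠ 0 := by
    rintro rfl
    exact hs0 (by rw [hsw, smul_zero])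
  obtain ⟨i, hi⟩ := Function.ne_iff.mp hw0
  obtain ⟨e, hpe, -⟩ :=
    exists_homog_of_homog_mul (hw i ▸ mem_degPiece.mp hs.1 i) hp.ne_zero hi
  have he : 0 < e := Nat.pos_of_ne_zero fun he => hp.not_isUnit <|
    isUnit_of_homog_zero (by rwa [he, Nat.cast_zero] at hpe) hp.ne_zero
  refine ⟨e, by exact_mod_cast he, (Submodule.ne_bot_iff _).mpr ⟨w, ⟨?_, ?_⟩, hw0⟩⟩
  · exact mem_degPiece_of_smul_mem hpe hp.ne_zero (hsw ▸ hs.1)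
  · have h := LinearMap.mem_ker.mp hs.2
    rw [hsw, phiK_smul, smul_eq_zero] at h
    exact LinearMap.mem_ker.mpr (h.resolve_left hp.ne_zero)

lemma not_forall_prime_dvd_of_isMax {m k : ℤ} (hk : ∀ j : ℤ, Nd n a Φ (m - j) ≠ ⊥ → j ≤ k)
    (hs : s ∈ Nd n a Φ (m - k)) (hs0 : s ≠ 0) : ∀ p, Prime p → ¬∀ i, p ∣ s i := fun p hp hdvd => by
  obtain ⟨e, he, hne⟩ := exists_Nd_ne_bot_of_prime_dvd hs hs0 hp hdvd
  rw [sub_sub] at hne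
  linarith [hk _ hne]

end Primitive

theorem statement8_general {K : Type*} [Field K]
    (n : ℕ) (a : Fin (n + 2) → ℤ) (b : Fin n → ℤ)
    (Φ : Matrix (Fin n) (Fin (n + 2)) (MvPolynomial (Fin 3) K))
    (hΦ : ∀ j i, homog (Φ j i) (a i - b j))
    (hfin : FiniteColength n a b Φ)
    (m : ℤ) (hm : (∑ i, a i) - (∑ j, b j) = 2 * m)
    (k : ℤ) (hk₁ : Nd n a Φ (m - k) ≠ ⊥) (hk₂ : ∀ j : ℤ, Nd n a Φ (m - j) ≠ ⊥ → j ≤ k) :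
    ∀ t : ℤ, t < k →
      Module.finrank K (Nd n a Φ (m + t)) = Nat.choose (k + t + 2).toNat 2 := by
  intro t htk
  obtain ⟨s, hs, hs0⟩ := (Submodule.ne_bot_iff _).mp hk₁
  rw [show k + t = m + t - (m - k) by ring]
  refine finrank_Nd_of_forall_eq_smul hs hs0 fun u hu => ?_
  obtain ⟨f, g, hg, hgu⟩ := exists_smul_eq_smul hΦ hfin hm htk hs hs0 hu
  exact exists_eq_smul_of_smul_eq_smul (not_forall_prime_dvd_of_isMax hk₂ hs hs0) hg hgu

/-- If `a - b` is even (`a - b = 2m`) and `N_{m-1} ≠ 0` (the associated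
normalized rank-2 bundle with `c₁ = 0` is unstable), and `k = max{ j : N_{m-j} ≠ 0 }`, then
`dim_K N_{m+t} = C(k+t+2, 2)` for every integer `t < k` (with `C(n,2) = 0` for `n < 2`). -/
theorem statement8 {K : Type*} [Field K] [IsAlgClosed K] [CharZero K]
    (n : ℕ) (a : Fin (n + 2) → ℤ) (b : Fin n → ℤ)
    (Φ : Matrix (Fin n) (Fin (n + 2)) (MvPolynomial (Fin 3) K))
    (hΦ : ∀ j i, homog (Φ j i) (a i - b j))
    (hfin : FiniteColength n a b Φ)
    (m : ℤ) (hm : (∑ i, a i) - (∑ j, b j) = 2 * m)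
    (hunstable : Nd n a Φ (m - 1) ≠ ⊥)
    (k : ℤ) (hk₁ : Nd n a Φ (m - k) ≠ ⊥) (hk₂ : ∀ j : ℤ, Nd n a Φ (m - j) ≠ ⊥ → j ≤ k) :
    ∀ t : ℤ, t < k →
      Module.finrank K (Nd n a Φ (m + t)) = Nat.choose (k + t + 2).toNat 2 :=
  statement8_general n a b Φ hΦ hfin m hm k hk₁ hk₂
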